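/- arXiv:2307.01950 — 3 statements merged into one kernel-verified Lean document; each statement's English description precedes it below -/
import Mathlib

section
/- For N odd and any even integer t ≠ 0, the involution X ↦ X Δ [1,N−1] of E_N maps E_N^{t,+} bijectively onto E_N^{−t,+}, where E_N^{t,+} = {X ∈ E_N : N ∉ X and γ(X) = t}. -/
/-!
Writing γ(X) = ∑_{i ∈ X} (-1)^i makes γ additive, and γ([1, 2m]) = 0. For N odd, the sets in
question are the subsets of D = [1, N - 1], on which X ↦ X ∆ D is complementation in D: it is an
involution, negates γ, and preserves the parity of |X| because |D| = N - 1 is even.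
-/

open scoped symmDiff

/-- γ(X) = |{i ∈ X : i even}| − |{i ∈ X : i odd}|, as an integer. -/
def gam (X : Finset ℕ) : ℤ :=
  ((X.filter (fun i => Even i)).card : ℤ) - ((X.filter (fun i => Odd i)).card : ℤ)

open Finset

lemma gam_eq_sum_neg_one_pow (X : Finset ℕ) : gam X = ∑ i ∈ X, (-1 : ℤ) ^ i := by
  rw [← sum_filter_add_sum_filter_not X Even,
    sum_congr rfl fun i hi => (mem_filter.1 hi).2.neg_one_pow,
    sum_congr rfl fun i hi => (Nat.not_even_iff_odd.1 (mem_filter.1 hi).2).neg_one_pow]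
  simp [gam, Nat.not_even_iff_odd, sub_eq_add_neg]

lemma gam_sdiff {X D : Finset ℕ} (h : X ⊆ D) : gam (D \ X) = gam D - gam X := by
  simp only [gam_eq_sum_neg_one_pow, sum_sdiff_eq_sub h]

lemma gam_Icc_one_two_mul (m : ℕ) : gam (Icc 1 (2 * m)) = 0 := by
  rw [gam_eq_sum_neg_one_pow]
  induction m with
  | zero => rfl
  | succ m ih =>
    rw [show 2 * (m + 1) = 2 * m + 1 + 1 by ring, sum_Icc_succ_top (by omega),
      sum_Icc_succ_top (by omega), ih]
    simp [pow_succ, pow_mul]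

lemma subset_Icc_sub_one_iff {X : Finset ℕ} {N : ℕ} :
    X ⊆ Icc 1 (N - 1) ↔ X ⊆ Icc 1 N ∧ N ∉ X := by
  refine ⟨fun h => ⟨h.trans (Icc_subset_Icc_right (N.sub_le 1)), fun hN => ?_⟩,
    fun ⟨h, hN⟩ i hi => ?_⟩
  · have := mem_Icc.1 (h hN)
    omega
  · have := mem_Icc.1 (h hi)
    have : i ≠ N := fun e => hN (e ▸ hi)
    exact mem_Icc.2 ⟨by omega, by omega⟩

lemma mapsTo_symmDiff_of_gam_eq_zero {D : Finset ℕ} (hD : Even D.card) (hgam : gam D = 0)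
    (t : ℤ) :
    Set.MapsTo (· ∆ D) {X | X ⊆ D ∧ Even X.card ∧ gam X = t}
      {X | X ⊆ D ∧ Even X.card ∧ gam X = -t} := by
  rintro X ⟨hXD, hX, rfl⟩
  change X ∆ D ∈ _
  rw [symmDiff_of_le hXD, Set.mem_ofPred_eq, card_sdiff_of_subset hXD, gam_sdiff hXD, hgam,
    zero_sub]
  exact ⟨sdiff_subset, (Nat.even_sub (card_le_card hXD)).2 (iff_of_true hD hX), rfl⟩

lemma bijOn_symmDiff_of_gam_eq_zero {D : Finset ℕ} (hD : Even D.card) (hgam : gam D = 0)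
    (t : ℤ) :
    Set.BijOn (· ∆ D) {X | X ⊆ D ∧ Even X.card ∧ gam X = t}
      {X | X ⊆ D ∧ Even X.card ∧ gam X = -t} := by
  have hback := mapsTo_symmDiff_of_gam_eq_zero hD hgam (-t)
  rw [neg_neg] at hback
  have hinv (X : Finset ℕ) : X ∆ D ∆ D = X := symmDiff_symmDiff_cancel_right D X
  exact Set.InvOn.bijOn ⟨fun X _ => hinv X, fun X _ => hinv X⟩
    (mapsTo_symmDiff_of_gam_eq_zero hD hgam t) hback

theorem stmt5_general (N : ℕ) (hN : Odd N) (t : ℤ) :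
    Set.BijOn (fun X => X ∆ Finset.Icc 1 (N - 1))
      {X : Finset ℕ | X ⊆ Finset.Icc 1 N ∧ Even X.card ∧ N ∉ X ∧ gam X = t}
      {X : Finset ℕ | X ⊆ Finset.Icc 1 N ∧ Even X.card ∧ N ∉ X ∧ gam X = -t} := by
  have hsets (s : ℤ) : {X : Finset ℕ | X ⊆ Icc 1 N ∧ Even X.card ∧ N ∉ X ∧ gam X = s} =
      {X | X ⊆ Icc 1 (N - 1) ∧ Even X.card ∧ gam X = s} := by
    ext X
    simp only [Set.mem_ofPred_eq, subset_Icc_sub_one_iff]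
    tauto
  obtain ⟨k, rfl⟩ := hN
  rw [hsets, hsets, Nat.add_sub_cancel]
  exact bijOn_symmDiff_of_gam_eq_zero (by simp) (gam_Icc_one_two_mul k) t

/-- For even t ≠ 0, X ↦ X ∆ [1,N−1] maps E_N^{t,+} bijectively onto E_N^{−t,+}. -/
theorem stmt5 (N : ℕ) (hN : Odd N) (h3 : 3 ≤ N) (t : ℤ) (ht : Even t) (ht0 : t ≠ 0) :
    Set.BijOn (fun X => X ∆ Finset.Icc 1 (N - 1))
      {X : Finset ℕ | X ⊆ Finset.Icc 1 N ∧ Even X.card ∧ N ∉ X ∧ gam X = t}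
      {X : Finset ℕ | X ⊆ Finset.Icc 1 N ∧ Even X.card ∧ N ∉ X ∧ gam X = -t} :=
  stmt5_general N hN t
end

section
/- The restriction of the symplectic form (X,X') = |X ∩ X'| mod 2 on E_N to the subspace E_N^+ = {X ∈ E_N : N ∉ X} has one-dimensional radical, spanned by [1,N−1] = {1,...,N−1}. -/
/-! A set `X` meeting every 2-subset `{a, b}` of `S` evenly contains either both or neither of
`a` and `b`, so it is `∅` or `S`; conversely `∅` and `S` meet every even subset of `S` evenly.
Here `S = [1, N - 1]`, since the members of `E_N^+` are exactly the even subsets of `[1, N - 1]`. -/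

namespace Finset

variable {α : Type*} [DecidableEq α]

theorem inter_pair_eq_singleton {X : Finset α} {a b : α} (ha : a ∈ X) (hb : b ∉ X) :
    X ∩ {a, b} = {a} := by
  rw [inter_insert_of_mem ha, inter_singleton_of_notMem hb, insert_empty]

theorem forall_even_card_inter_iff {S X : Finset α} (hXS : X ⊆ S) :
    (∀ Y ⊆ S, Even #Y → Even #(X ∩ Y)) ↔ X = ∅ ∨ X = S := by
  constructor
  · intro hX
    by_contra! hne
    obtain ⟨⟨a, ha⟩, hXS'⟩ := hne
    obtain ⟨b, hbS, hbX⟩ := not_subset.mp fun hSX => hXS' (hXS.antisymm hSX)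
    have hab : a ≠ b := fun h => hbX (h ▸ ha)
    have hpair := hX {a, b} (insert_subset (hXS ha) (singleton_subset_iff.2 hbS))
      (by rw [card_pair hab]; exact even_two)
    rw [inter_pair_eq_singleton ha hbX, card_singleton] at hpair
    exact Nat.not_even_one hpair
  · rintro (rfl | rfl) Y hYS hY
    · simp
    · rwa [inter_eq_right.2 hYS]

end Finset

theorem Finset.subset_Icc_one_pred_iff {X : Finset ℕ} {N : ℕ} :
    X ⊆ Finset.Icc 1 (N - 1) ↔ X ⊆ Finset.Icc 1 N ∧ N ∉ X := by
  constructor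
  · intro hX
    refine ⟨hX.trans (Finset.Icc_subset_Icc_right (Nat.sub_le N 1)), fun hN => ?_⟩
    have := Finset.mem_Icc.1 (hX hN)
    omega
  · rintro ⟨hX, hNX⟩ x hx
    have := Finset.mem_Icc.1 (hX hx)
    have : x ≠ N := fun h => hNX (h ▸ hx)
    rw [Finset.mem_Icc]
    omega

theorem stmt7_general (N : ℕ) :
    ∀ X : Finset ℕ, X ⊆ Finset.Icc 1 N → Even X.card → N ∉ X →
      ((∀ X' : Finset ℕ, X' ⊆ Finset.Icc 1 N → Even X'.card → N ∉ X' →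
          Even (X ∩ X').card) ↔ (X = ∅ ∨ X = Finset.Icc 1 (N - 1))) := by
  intro X hX _ hNX
  rw [← Finset.forall_even_card_inter_iff (Finset.subset_Icc_one_pred_iff.2 ⟨hX, hNX⟩)]
  refine forall_congr' fun X' => ?_
  rw [Finset.subset_Icc_one_pred_iff]
  tauto

/-- The radical of the form (X,X') = |X ∩ X'| mod 2 restricted to
E_N^+ = {X ∈ E_N : N ∉ X} consists exactly of ∅ and [1,N−1]; i.e. it is
one-dimensional, spanned by [1,N−1]. -/
theorem stmt7 (N : ℕ) (hN : Odd N) (h3 : 3 ≤ N) :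
    ∀ X : Finset ℕ, X ⊆ Finset.Icc 1 N → Even X.card → N ∉ X →
      ((∀ X' : Finset ℕ, X' ⊆ Finset.Icc 1 N → Even X'.card → N ∉ X' →
          Even (X ∩ X').card) ↔ (X = ∅ ∨ X = Finset.Icc 1 (N - 1))) :=
  stmt7_general N
end

section
/- The 4×4 rational matrix M = (1/2)·[[−1,−1,0,1],[−1,−1,1,0],[−2,2,1,1],[2,−2,1,1]] is an involution (M² = I), but M is not upper triangular with respect to any ordering of the index set {1,2,3,4}: for every permutation σ of {1,2,3,4}, the conjugated matrix P_σ M P_σ^{−1} is not upper triangular. -/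
/-! The entries `M 2 3` and `M 3 2` are both nonzero, and whichever of the indices `2`, `3`
comes later in an ordering, one of these two entries lands strictly below the diagonal. -/

/-- The matrix 2α'_1 of §5.1 (N = 5), divided by 2. -/
noncomputable def M : Matrix (Fin 4) (Fin 4) ℚ :=
  (1 / 2 : ℚ) • !![-1, -1, 0, 1; -1, -1, 1, 0; -2, 2, 1, 1; 2, -2, 1, 1]

theorem Matrix.exists_lt_apply_perm_ne_zero {ι α : Type*} [LinearOrder ι] [Zero α]
    (A : Matrix ι ι α) {a b : ι} (hab : a ≠ b) (h₁ : A a b ≠ 0) (h₂ : A b a ≠ 0)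
    (σ : Equiv.Perm ι) : ∃ i j, j < i ∧ A (σ i) (σ j) ≠ 0 := by
  rcases (σ.symm.injective.ne hab).lt_or_gt with h | h
  · exact ⟨σ.symm b, σ.symm a, h, by simpa using h₂⟩
  · exact ⟨σ.symm a, σ.symm b, h, by simpa using h₁⟩

theorem M_mul_self : M * M = 1 := by
  ext i j
  fin_cases i <;> fin_cases j <;> simp [M, Matrix.mul_apply, Fin.sum_univ_four] <;> norm_num

/-- M is an involution, but no simultaneous permutation of rows and columns
makes it upper triangular. -/
theorem stmt18 :
    M * M = 1 ∧
    ∀ σ : Equiv.Perm (Fin 4), ∃ i j : Fin 4, j < i ∧ M (σ i) (σ j) ≠ 0 :=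
  ⟨M_mul_self, M.exists_lt_apply_perm_ne_zero (a := 2) (b := 3) (by decide)
    (by simp [M]) (by simp [M])⟩
end
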